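/- arXiv:1007.0575 — 4 statements merged into one kernel-verified Lean document; each statement's English description precedes it below -/
import Mathlib

section
/- With λ = exp(-5πi/24), j = exp(2πi/3), and x_c = 1/√(2+√2), one has 1 + x_c · j · conj(λ) + x_c · conj(j) · λ = 0. -/
/-!
Writing `w = j · conj λ`, the two nonconstant terms are `x_c w` and its conjugate, so the sum is
`1 + 2 x_c Re w = 1 + 2 x_c cos(2π/3 + 5π/24) = 1 - 2 x_c cos(π/8)`, which vanishes because
`cos(π/8) = √(2+√2)/2 = 1/(2 x_c)`.
-/

open Complex

theorem exp_mul_I_mul_conj_exp_mul_I (a b : ℝ) :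
    exp (a * I) * (starRingEnd ℂ) (exp (b * I)) = exp ((a - b : ℝ) * I) := by
  rw [← exp_conj, ← exp_add]
  congr 1
  simp only [map_mul, conj_ofReal, conj_I, ofReal_sub]
  ring

theorem one_add_mul_exp_mul_conj_add_mul_conj_mul_exp (x a b : ℝ) :
    1 + x * exp (a * I) * (starRingEnd ℂ) (exp (b * I))
        + x * (starRingEnd ℂ) (exp (a * I)) * exp (b * I)
      = ((1 + 2 * x * Real.cos (a - b) : ℝ) : ℂ) := by
  have hconj : (starRingEnd ℂ) (exp (a * I)) * exp (b * I)
      = (starRingEnd ℂ) (exp (a * I) * (starRingEnd ℂ) (exp (b * I))) := by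
    rw [map_mul, conj_conj]
  rw [mul_assoc, mul_assoc, hconj, add_assoc, ← mul_add, add_conj,
    exp_mul_I_mul_conj_exp_mul_I, exp_ofReal_mul_I_re]
  push_cast
  ring

theorem one_add_two_mul_inv_sqrt_mul_cos_pi_sub_pi_div_eight :
    1 + 2 * (1 / Real.sqrt (2 + Real.sqrt 2)) * Real.cos (Real.pi - Real.pi / 8) = 0 := by
  have hpos : 0 < Real.sqrt (2 + Real.sqrt 2) := by positivity
  rw [Real.cos_pi_sub, Real.cos_pi_div_eight]
  field_simp
  ring

/-- With `λ = exp(-5πi/24)`, `j = exp(2πi/3)` and `x_c = 1/√(2+√2)`, one has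
`1 + x_c · j · conj(λ) + x_c · conj(j) · λ = 0`. -/
theorem key_local_identity :
    (1 : ℂ)
      + (1 / Real.sqrt (2 + Real.sqrt 2) : ℝ) * Complex.exp (2 * Real.pi * I / 3)
          * (starRingEnd ℂ) (Complex.exp (-(5 * Real.pi * I) / 24))
      + (1 / Real.sqrt (2 + Real.sqrt 2) : ℝ) * (starRingEnd ℂ) (Complex.exp (2 * Real.pi * I / 3))
          * Complex.exp (-(5 * Real.pi * I) / 24) = 0 := by
  have hj : (2 * Real.pi * I / 3 : ℂ) = ((2 * Real.pi / 3 : ℝ) : ℂ) * I := by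
    push_cast; ring
  have hlam : (-(5 * Real.pi * I) / 24 : ℂ) = ((-(5 * Real.pi) / 24 : ℝ) : ℂ) * I := by
    push_cast; ring
  have hangle : 2 * Real.pi / 3 - -(5 * Real.pi) / 24 = Real.pi - Real.pi / 8 := by ring
  rw [hj, hlam, one_add_mul_exp_mul_conj_add_mul_conj_mul_exp, hangle,
    one_add_two_mul_inv_sqrt_mul_cos_pi_sub_pi_div_eight, ofReal_zero]
end

section
/- Let c_α > 0 and x_c > 0 be fixed. Suppose (A_T)_{T≥1} and (B_T)_{T≥1} are sequences of nonnegative reals satisfying c_α·A_T + B_T = 1 for all T, and A_{T+1} - A_T ≤ x_c·(B_{T+1})^2 for all T. Then B_T ≥ min(B_1, 1/(c_α·x_c)) / T for every T ≥ 1, and in particular if B_1 > 0 then the series Σ_T B_T diverges. -/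
/-! With `C = c_α x_c`, the identity `c_α A_T + B_T = 1` turns the recursion into
`B_T ≤ B_{T+1} + C B_{T+1}²`. If the bound `B_T ≥ m/T` held at `T` but failed at `T + 1`,
then, since `C m ≤ 1`,
`B_T < m/(T+1) + C (m/(T+1))² ≤ m (T+2)/(T+1)² < m/T`, a contradiction.
Divergence follows by comparison with the harmonic series. -/

open Filter

lemma add_mul_sq_lt_div {C m t y : ℝ} (hC : 0 ≤ C) (hCm : C * m ≤ 1) (ht : 0 < t)
    (hy : 0 ≤ y) (hym : y < m / (t + 1)) : y + C * y ^ 2 < m / t := by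
  have ht1 : 0 < t + 1 := by linarith
  have hCy : C * y ≤ 1 / (t + 1) := by
    rw [le_div_iff₀ ht1]
    rw [lt_div_iff₀ ht1] at hym
    nlinarith [mul_le_mul_of_nonneg_left hym.le hC]
  have hm : 0 < m := (div_pos_iff_of_pos_right ht1).mp (hy.trans_lt hym)
  calc y + C * y ^ 2 = y * (1 + C * y) := by ring
    _ ≤ y * (1 + 1 / (t + 1)) := by gcongr
    _ < m / (t + 1) * (1 + 1 / (t + 1)) := by gcongr
    _ = m * (t * (t + 2)) / (t * (t + 1) ^ 2) := by field_simp; ring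
    _ ≤ m * (t + 1) ^ 2 / (t * (t + 1) ^ 2) := by gcongr; nlinarith
    _ = m / t := by field_simp

lemma div_natCast_le_of_sub_le_mul_sq {b : ℕ → ℝ} {C m : ℝ} (hC : 0 ≤ C) (hCm : C * m ≤ 1)
    (hb : ∀ T, 1 ≤ T → 0 ≤ b T) (hstep : ∀ T, 1 ≤ T → b T - b (T + 1) ≤ C * b (T + 1) ^ 2)
    (hm : m ≤ b 1) : ∀ T, 1 ≤ T → m / T ≤ b T := by
  intro T hT
  induction T, hT using Nat.le_induction with
  | base => simpa using hm
  | succ T hT ih =>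
    by_contra! hlt
    push_cast at hlt
    have hT : (0 : ℝ) < T := by exact_mod_cast hT
    have := add_mul_sq_lt_div hC hCm hT (hb (T + 1) (by omega)) hlt
    linarith [hstep T (by exact_mod_cast hT)]

lemma not_summable_of_div_natCast_le {b : ℕ → ℝ} {m : ℝ} (hm : 0 < m)
    (hb : ∀ T, 1 ≤ T → m / T ≤ b T) : ¬ Summable b := by
  intro hsum
  have hharmonic : Summable fun T : ℕ => m * (T : ℝ)⁻¹ := by
    refine hsum.of_norm_bounded_eventually_nat ?_
    filter_upwards [eventually_ge_atTop 1] with T hT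
    rw [Real.norm_of_nonneg (by positivity), ← div_eq_mul_inv]
    exact hb T hT
  exact Real.not_summable_natCast_inv ((summable_mul_left_iff hm.ne').mp hharmonic)

theorem bridge_lower_bound_general (cα xc : ℝ) (hcα : 0 < cα) (hxc : 0 < xc)
    (A B : ℕ → ℝ)
    (hB : ∀ T : ℕ, 1 ≤ T → 0 ≤ B T)
    (hid : ∀ T : ℕ, 1 ≤ T → cα * A T + B T = 1)
    (hrec : ∀ T : ℕ, 1 ≤ T → A (T + 1) - A T ≤ xc * B (T + 1) ^ 2) :
    (∀ T : ℕ, 1 ≤ T → min (B 1) (1 / (cα * xc)) / (T : ℝ) ≤ B T) ∧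
    (0 < B 1 → ¬ Summable B) := by
  have hC : 0 < cα * xc := mul_pos hcα hxc
  have hstep : ∀ T, 1 ≤ T → B T - B (T + 1) ≤ cα * xc * B (T + 1) ^ 2 := by
    intro T hT
    calc B T - B (T + 1) = cα * (A (T + 1) - A T) := by
          linarith [hid T hT, hid (T + 1) (by omega)]
      _ ≤ cα * (xc * B (T + 1) ^ 2) := mul_le_mul_of_nonneg_left (hrec T hT) hcα.le
      _ = cα * xc * B (T + 1) ^ 2 := by ring
  have hCm : cα * xc * min (B 1) (1 / (cα * xc)) ≤ 1 :=
    (mul_le_mul_of_nonneg_left (min_le_right _ _) hC.le).trans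
      (mul_one_div_cancel hC.ne').le
  have hbound := div_natCast_le_of_sub_le_mul_sq hC.le hCm hB hstep (min_le_left _ _)
  exact ⟨hbound, fun hB1 => not_summable_of_div_natCast_le (lt_min hB1 (by positivity)) hbound⟩

/-- The key inductive estimate: if `c_α·A_T + B_T = 1` and
`A_{T+1} - A_T ≤ x_c·B_{T+1}²` for all `T ≥ 1`, with `A_T, B_T ≥ 0`, then
`B_T ≥ min(B_1, 1/(c_α x_c))/T` for all `T ≥ 1`; in particular if `B_1 > 0` the
series `Σ B_T` diverges. -/
theorem bridge_lower_bound (cα xc : ℝ) (hcα : 0 < cα) (hxc : 0 < xc)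
    (A B : ℕ → ℝ)
    (hA : ∀ T : ℕ, 1 ≤ T → 0 ≤ A T) (hB : ∀ T : ℕ, 1 ≤ T → 0 ≤ B T)
    (hid : ∀ T : ℕ, 1 ≤ T → cα * A T + B T = 1)
    (hrec : ∀ T : ℕ, 1 ≤ T → A (T + 1) - A T ≤ xc * B (T + 1) ^ 2) :
    (∀ T : ℕ, 1 ≤ T → min (B 1) (1 / (cα * xc)) / (T : ℝ) ≤ B T) ∧
    (0 < B 1 → ¬ Summable B) :=
  bridge_lower_bound_general cα xc hcα hxc A B hB hid hrec
end

section
/- If c_α·x_c·b² + b ≥ B for reals b, B ≥ 0 with c_α, x_c > 0, and B ≥ m/T with m = min(B₁, 1/(c_α·x_c)) for some T ≥ 1, then b ≥ m/(T+1). -/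
/-- The induction step for the lower bound `B_T ≥ m/T`: if `c_α·x_c·b² + b ≥ B` and
`B ≥ m/T` with `m = min(B₁, 1/(c_α x_c))`, then `b ≥ m/(T+1)`. -/
theorem bridge_induction_step (cα xc b B B₁ : ℝ) (T : ℕ)
    (hcα : 0 < cα) (hxc : 0 < xc) (hb : 0 ≤ b) (hB : 0 ≤ B) (hT : 1 ≤ T)
    (hrec : B ≤ cα * xc * b ^ 2 + b)
    (hind : min B₁ (1 / (cα * xc)) / (T : ℝ) ≤ B) :
    min B₁ (1 / (cα * xc)) / ((T : ℝ) + 1) ≤ b := by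
  set c := cα * xc with hc
  have hc0 : 0 < c := mul_pos hcα hxc
  set m := min B₁ (1 / c) with hm
  have hT1 : (1 : ℝ) ≤ (T : ℝ) := by exact_mod_cast hT
  have hT0 : (0 : ℝ) < (T : ℝ) := by linarith
  rcases le_or_gt m 0 with hm0 | hm0
  · calc m / ((T : ℝ) + 1) ≤ 0 := div_nonpos_of_nonpos_of_nonneg hm0 (by linarith)
      _ ≤ b := hb
  · by_contra h
    push_neg at h
    have hcm : c * m ≤ 1 := by
      have : m ≤ 1 / c := min_le_right _ _
      calc c * m ≤ c * (1 / c) := by nlinarith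
        _ = 1 := by field_simp
    have h1 : m ≤ (T : ℝ) * (c * b ^ 2 + b) := by
      have := (div_le_iff₀ hT0).mp (le_trans hind hrec)
      linarith
    have h2 : b * ((T : ℝ) + 1) < m :=
      (lt_div_iff₀ (by linarith : (0:ℝ) < (T : ℝ) + 1)).mp h
    nlinarith [mul_pos hc0 hm0, sq_nonneg ((T:ℝ)+1), mul_nonneg hb hT0.le,
      mul_lt_mul_of_pos_left h2 hc0, sq_nonneg b, mul_nonneg (mul_nonneg hc0.le hb) hb]
end

section
/- Let p, q, r be the three mid-edges adjacent to a vertex v of the hexagonal lattice, arranged counterclockwise, so that q - v = j·(p - v) and r - v = j²·(p - v) with j = e^{2πi/3}. Then for any complex number c, (q-v)·conj(λ)^4·c + (r-v)·λ^4·c = (p-v)·c·(j·conj(λ)^4 + conj(j)·λ^4) = 0, where λ = e^{-5πi/24}. -/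
open Complex

/-- Geometric form of the pair cancellation: if `p, q, r` are the three mid-edges around a
vertex `v`, arranged counterclockwise so that `q - v = j·(p - v)` and `r - v = j²·(p - v)`
with `j = e^{2πi/3}` and `λ = e^{-5πi/24}`, then for any complex number `c`,
`(q-v)·conj(λ)⁴·c + (r-v)·λ⁴·c = (p-v)·c·(j·conj(λ)⁴ + conj(j)·λ⁴) = 0`. -/
theorem pair_cancellation_geometric (p q r v c : ℂ)
    (hq : q - v = Complex.exp (2 * Real.pi * I / 3) * (p - v))
    (hr : r - v = Complex.exp (2 * Real.pi * I / 3) ^ 2 * (p - v)) :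
    (q - v) * (starRingEnd ℂ) (Complex.exp (-(5 * Real.pi * I) / 24)) ^ 4 * c
        + (r - v) * Complex.exp (-(5 * Real.pi * I) / 24) ^ 4 * c
      = (p - v) * c * (Complex.exp (2 * Real.pi * I / 3)
          * (starRingEnd ℂ) (Complex.exp (-(5 * Real.pi * I) / 24)) ^ 4
        + (starRingEnd ℂ) (Complex.exp (2 * Real.pi * I / 3))
          * Complex.exp (-(5 * Real.pi * I) / 24) ^ 4) ∧
    (p - v) * c * (Complex.exp (2 * Real.pi * I / 3)
          * (starRingEnd ℂ) (Complex.exp (-(5 * Real.pi * I) / 24)) ^ 4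
        + (starRingEnd ℂ) (Complex.exp (2 * Real.pi * I / 3))
          * Complex.exp (-(5 * Real.pi * I) / 24) ^ 4) = 0 := by
  have hconjL : (starRingEnd ℂ) (Complex.exp (-(5 * Real.pi * I) / 24))
      = Complex.exp ((5 * Real.pi * I) / 24) := by
    rw [← Complex.exp_conj]
    congr 1
    simp [map_div₀, map_ofNat, Complex.conj_I]
  have hconjj : (starRingEnd ℂ) (Complex.exp (2 * Real.pi * I / 3))
      = Complex.exp (-(2 * Real.pi * I) / 3) := by
    rw [← Complex.exp_conj]
    congr 1
    simp [map_div₀, map_ofNat, Complex.conj_I]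
  have hhalf : Complex.exp ((Real.pi : ℂ) / 2 * I) = I := by
    rw [Complex.exp_mul_I, Complex.cos_pi_div_two, Complex.sin_pi_div_two]; ring
  have h32 : Complex.exp ((3 * (Real.pi : ℂ) / 2) * I) = -I := by
    rw [show (3 * (Real.pi : ℂ) / 2) * I = Real.pi * I + (Real.pi : ℂ) / 2 * I by ring,
      Complex.exp_add, Complex.exp_pi_mul_I, hhalf]; ring
  have hneg32 : Complex.exp (-(3 * (Real.pi : ℂ) / 2) * I) = I := by
    rw [show -(3 * (Real.pi : ℂ) / 2) * I = (Real.pi : ℂ) / 2 * I + -(2 * Real.pi * I) by ring,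
      Complex.exp_add, hhalf, Complex.exp_neg, Complex.exp_two_pi_mul_I]; ring
  have E1 : Complex.exp (2 * Real.pi * I / 3)
      * (starRingEnd ℂ) (Complex.exp (-(5 * Real.pi * I) / 24)) ^ 4 = -I := by
    rw [hconjL, ← Complex.exp_nat_mul, ← Complex.exp_add]
    exact (congrArg Complex.exp (by push_cast; ring)).trans h32
  have E2 : Complex.exp (2 * Real.pi * I / 3) ^ 2
      * Complex.exp (-(5 * Real.pi * I) / 24) ^ 4 = I := by
    rw [← Complex.exp_nat_mul, ← Complex.exp_nat_mul, ← Complex.exp_add]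
    exact (congrArg Complex.exp (by push_cast; ring)).trans hhalf
  have E3 : (starRingEnd ℂ) (Complex.exp (2 * Real.pi * I / 3))
      * Complex.exp (-(5 * Real.pi * I) / 24) ^ 4 = I := by
    rw [hconjj, ← Complex.exp_nat_mul, ← Complex.exp_add]
    exact (congrArg Complex.exp (by push_cast; ring)).trans hneg32
  constructor
  · rw [hq, hr]
    linear_combination (p - v) * c * E2 - (p - v) * c * E3
  · linear_combination (p - v) * c * E1 + (p - v) * c * E3
end
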